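/- Let E ⊆ [0,∞). Then E is completely strongly porous if and only if there exist q > 1 and a strictly decreasing sequence {xₙ} of positive reals with x_{n+1}/xₙ → 0 such that E ⊑ W(q), where W(q) := ⋃_{n∈ℕ} (q⁻¹xₙ, qxₙ) and A ⊑ B means there is t > 0 with A ∩ (0,t) ⊆ B ∩ (0,t). -/

import Mathlib

open Filter Set Topology ENNReal

/-- λ(E,0,h): the supremum of lengths of open subintervals of (0,h) disjoint from E. -/
noncomputable def lambda0 (E : Set ℝ) (h : ℝ) : ℝ :=
  sSup {l : ℝ | ∃ a b : ℝ, 0 ≤ a ∧ a ≤ b ∧ b ≤ h ∧ Set.Ioo a b ∩ E = ∅ ∧ l = b - a}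

/-- p⁺(E,0): the right porosity of E at 0. -/
noncomputable def porosity (E : Set ℝ) : ℝ :=
  Filter.limsup (fun h => lambda0 E h / h) (nhdsWithin 0 (Set.Ioi 0))

/-- 0 is an accumulation point of E (E ⊆ [0,∞), relative topology of [0,∞)). -/
def AccZero (E : Set ℝ) : Prop := ∀ ε > 0, ∃ x ∈ E, 0 < x ∧ x < ε

/-- (a,b) is a connected component of the exterior of E in [0,∞):
an open interval in [0,∞) disjoint from E, maximal with this property. -/
def IsCompExt (E : Set ℝ) (a b : ℝ) : Prop :=
  0 ≤ a ∧ a < b ∧ Set.Ioo a b ∩ E = ∅ ∧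
  ∀ c d : ℝ, 0 ≤ c → Set.Ioo a b ⊆ Set.Ioo c d → (c, d) ≠ (a, b) → Set.Ioo c d ∩ E ≠ ∅

/-- Membership in Ĩ_E. -/
def memIE (E : Set ℝ) (A : ℕ → ℝ × ℝ) : Prop :=
  (∀ n, 0 < (A n).1) ∧ (∀ n, IsCompExt E (A n).1 (A n).2) ∧
  Filter.Tendsto (fun n => (A n).1) Filter.atTop (nhds 0) ∧
  Filter.Tendsto (fun n => ((A n).2 - (A n).1) / (A n).2) Filter.atTop (nhds 1)

/-- Almost decreasing sequence: eventually nonincreasing. -/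
def AlmostDecr (τ : ℕ → ℝ) : Prop := ∀ᶠ n in Filter.atTop, τ (n + 1) ≤ τ n

/-- Membership in Ẽ₀^d: almost decreasing sequences in E∖{0} tending to 0. -/
def memE0d (E : Set ℝ) (τ : ℕ → ℝ) : Prop :=
  AlmostDecr τ ∧ Filter.Tendsto τ Filter.atTop (nhds 0) ∧ ∀ n, τ n ∈ E \ {0}

/-- Weak equivalence ≍ of sequences: c₁ aₙ ≤ γₙ ≤ c₂ aₙ for large n. -/
def SeqEquiv (a γ : ℕ → ℝ) : Prop :=
  ∃ c₁ c₂ : ℝ, 0 < c₁ ∧ 0 < c₂ ∧ ∀ᶠ n in Filter.atTop, c₁ * a n ≤ γ n ∧ γ n ≤ c₂ * a n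

/-- E is τ̃-strongly porous. -/
def StronglyPorousWrt (E : Set ℝ) (τ : ℕ → ℝ) : Prop :=
  ∃ A : ℕ → ℝ × ℝ, memIE E A ∧ SeqEquiv (fun n => (A n).1) τ

/-- E is completely strongly porous at 0. -/
def CSP (E : Set ℝ) : Prop := ∀ τ : ℕ → ℝ, memE0d E τ → StronglyPorousWrt E τ

/-- Membership in Ĩ_E^d: first coordinates almost decreasing. -/
def memIEd (E : Set ℝ) (A : ℕ → ℝ × ℝ) : Prop := memIE E A ∧ AlmostDecr (fun n => (A n).1)

/-- Membership in Ĩ_E^{sd}: first coordinates eventually strictly decreasing. -/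
def memIEsd (E : Set ℝ) (A : ℕ → ℝ × ℝ) : Prop :=
  memIE E A ∧ ∀ᶠ n in Filter.atTop, (A (n + 1)).1 < (A n).1

/-- The preorder Ã ⪯ L̃. -/
def Prec (A L : ℕ → ℝ × ℝ) : Prop :=
  ∃ N₁ : ℕ, ∃ f : ℕ → ℕ, ∀ n ≥ N₁, (A n).1 = (L (f n)).1

/-- L̃ is universal: every Ã ∈ Ĩ_E^d satisfies Ã ⪯ L̃. -/
def Universal (E : Set ℝ) (L : ℕ → ℝ × ℝ) : Prop :=
  ∀ A : ℕ → ℝ × ℝ, memIEd E A → Prec A L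

/-- M(L̃) = limsup lₙ/mₙ₊₁ (in [0,∞]). -/
noncomputable def Mq (L : ℕ → ℝ × ℝ) : ℝ≥0∞ :=
  Filter.limsup (fun n => ENNReal.ofReal ((L n).1 / (L (n + 1)).2)) Filter.atTop

/-- C(τ̃) = inf over {(aₙ,bₙ)} ∈ Ĩ_E with τₙ ≤ aₙ eventually of limsup aₙ/τₙ. -/
noncomputable def Cseq (E : Set ℝ) (τ : ℕ → ℝ) : ℝ≥0∞ :=
  ⨅ (A : ℕ → ℝ × ℝ) (_ : memIE E A ∧ ∀ᶠ n in Filter.atTop, τ n ≤ (A n).1),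
    Filter.limsup (fun n => ENNReal.ofReal ((A n).1 / τ n)) Filter.atTop

/-- C_E = sup over τ̃ ∈ Ẽ₀^d of C(τ̃). -/
noncomputable def CE (E : Set ℝ) : ℝ≥0∞ := ⨆ (τ : ℕ → ℝ) (_ : memE0d E τ), Cseq E τ

/-- E is uniformly strongly porous at 0. -/
def USP (E : Set ℝ) : Prop :=
  ∃ c : ℝ, 0 < c ∧ ∀ τ : ℕ → ℝ, memE0d E τ → ∃ A : ℕ → ℝ × ℝ, memIE E A ∧
    (∀ᶠ n in Filter.atTop, τ n ≤ (A n).1) ∧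
    Filter.limsup (fun n => ENNReal.ofReal ((A n).1 / τ n)) Filter.atTop ≤ ENNReal.ofReal c

/-!
If `E ⊑ W(q)`, each small `τₙ ∈ E` lies in a window `(q⁻¹ x_k, q x_k)`. Since
`x_k / x_{k-1} → 0`, the next window up starts far above it, so the interval from the supremum of
`E ∩ (0, q x_k]` to the next point of `E` is a component `(aₙ, bₙ)` with `τₙ ≤ aₙ ≤ q² τₙ` and
`bₙ / aₙ → ∞`.

Conversely, choose greedily `yₙ ∈ E` with `2 y_{n+1} < yₙ` such that every small point of `E` is
within a factor `2` of some `yₙ`. Complete strong porosity applied to `(yₙ)` gives components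
`(αₖ, βₖ)` with `yₖ ≤ αₖ ≤ C yₖ` and `αₖ / βₖ → 0`. A run of steps with `y_m ≤ C y_{m+1}`
cannot jump over the gap above its last term, so the whole run stays within a factor `C`. Hence
the big steps `y_m > C y_{m+1}` occur infinitely often, their ratios are bounded by
`αₖ / βₖ → 0`, and the terms right after them form the lacunary sequence, with `q = 3 C`.
-/

def HasLacunaryCover (E : Set ℝ) : Prop :=
  ∃ q : ℝ, 1 < q ∧ ∃ x : ℕ → ℝ, StrictAnti x ∧ (∀ n, 0 < x n) ∧
    Tendsto (fun n => x (n + 1) / x n) atTop (𝓝 0) ∧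
    ∃ t : ℝ, 0 < t ∧ E ∩ Ioo 0 t ⊆ (⋃ n : ℕ, Ioo (q⁻¹ * x n) (q * x n)) ∩ Ioo 0 t

section Sequences

lemma tendsto_sub_div_self_iff {α : Type*} {l : Filter α} {a b : α → ℝ} (hb : ∀ n, b n ≠ 0) :
    Tendsto (fun n => (b n - a n) / b n) l (𝓝 1) ↔ Tendsto (fun n => a n / b n) l (𝓝 0) := by
  have h : (fun n => (b n - a n) / b n) = fun n => 1 - a n / b n := by
    funext n; rw [sub_div, div_self (hb n)]
  rw [h]
  constructor
  · intro h1; simpa using (tendsto_const_nhds (x := (1 : ℝ))).sub h1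
  · intro h0; simpa using (tendsto_const_nhds (x := (1 : ℝ))).sub h0

lemma Antitone.tendsto_atTop_of_tendsto_comp {ι : Type*} {l : Filter ι} {x : ℕ → ℝ}
    (hx : Antitone x) (hpos : ∀ n, 0 < x n) {k : ι → ℕ} (h : Tendsto (fun i => x (k i)) l (𝓝 0)) :
    Tendsto k l atTop :=
  tendsto_atTop.2 fun M => (h.eventually (gt_mem_nhds (hpos M))).mono fun _ hi =>
    le_of_not_gt fun hlt => (hx hlt.le).not_gt hi

lemma Nat.exists_nth_le_lt_nth_succ {p : ℕ → Prop} (hp : (Set.ofPred p).Infinite) {k : ℕ}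
    (hk : nth p 0 ≤ k) : ∃ i, nth p i ≤ k ∧ k < nth p (i + 1) := by
  classical
  set c := count p (k + 1)
  have hc : 1 ≤ c := by
    by_contra h
    have := (count_le_iff_le_nth hp (a := k + 1) (b := 0)).1 (by omega)
    omega
  refine ⟨c - 1, Nat.lt_succ_iff.1 (nth_lt_of_lt_count (n := k + 1) (by omega)), ?_⟩
  exact (count_le_iff_le_nth hp (a := k + 1) (b := c - 1 + 1)).1 (by omega)

end Sequences

section Components

variable {E : Set ℝ}

lemma IsCompExt.le_or_le {a b : ℝ} (h : IsCompExt E a b) {e : ℝ} (he : e ∈ E) : e ≤ a ∨ b ≤ e := by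
  by_contra! hab
  exact (Set.eq_empty_iff_forall_notMem.1 h.2.2.1) e ⟨hab, he⟩

lemma memIE.snd_pos {A : ℕ → ℝ × ℝ} (h : memIE E A) (n : ℕ) : 0 < (A n).2 :=
  (h.1 n).trans (h.2.1 n).2.1

lemma memIE.tendsto_fst_div_snd {A : ℕ → ℝ × ℝ} (h : memIE E A) :
    Tendsto (fun n => (A n).1 / (A n).2) atTop (𝓝 0) :=
  (tendsto_sub_div_self_iff fun n => (h.snd_pos n).ne').1 h.2.2.2

lemma isCompExt_of_forall_le_or_le {a b : ℝ} (ha : 0 ≤ a) (hab : a < b)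
    (hgap : ∀ e ∈ E, e ≤ a ∨ b ≤ e) (hbelow : ∀ c < a, ∃ e ∈ E, c < e ∧ e ≤ a)
    (habove : ∀ d, b < d → ∃ e ∈ E, b ≤ e ∧ e < d) : IsCompExt E a b := by
  refine ⟨ha, hab, ?_, fun c d _ hsub hne => ?_⟩
  · refine Set.eq_empty_iff_forall_notMem.2 fun e ⟨⟨hae, heb⟩, he⟩ => ?_
    rcases hgap e he with h | h <;> linarith
  · obtain ⟨hca, hbd⟩ := (Ioo_subset_Ioo_iff hab).1 hsub
    rw [← Set.nonempty_iff_ne_empty]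
    rcases hca.lt_or_eq with hca | rfl
    · obtain ⟨e, he, hce, hea⟩ := hbelow c hca
      exact ⟨e, ⟨hce, by linarith⟩, he⟩
    · have hbd : b < d := hbd.lt_of_ne fun h => hne (by rw [h])
      obtain ⟨e, he, hbe, hed⟩ := habove d hbd
      exact ⟨e, ⟨by linarith, hed⟩, he⟩

lemma isCompExt_sSup_sInf {τ r : ℝ} (hτ : 0 < τ) (hτE : τ ∈ E) (hτr : τ ≤ r)
    (habove : (E ∩ Ioi r).Nonempty) (hr : r < sInf (E ∩ Ioi r)) :
    τ ≤ sSup (E ∩ Ioc 0 r) ∧ sSup (E ∩ Ioc 0 r) ≤ r ∧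
      IsCompExt E (sSup (E ∩ Ioc 0 r)) (sInf (E ∩ Ioi r)) := by
  have hbdd : BddAbove (E ∩ Ioc 0 r) := ⟨r, fun e he => he.2.2⟩
  have hne : (E ∩ Ioc 0 r).Nonempty := ⟨τ, hτE, hτ, hτr⟩
  have hτa : τ ≤ sSup (E ∩ Ioc 0 r) := le_csSup hbdd ⟨hτE, hτ, hτr⟩
  have har : sSup (E ∩ Ioc 0 r) ≤ r := csSup_le hne fun e he => he.2.2
  refine ⟨hτa, har, isCompExt_of_forall_le_or_le (by linarith) (by linarith) (fun e he => ?_)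
    (fun c hc => ?_) (fun d hd => ?_)⟩
  · rcases le_or_gt e 0 with h0 | h0
    · left; linarith
    rcases le_or_gt e r with hr' | hr'
    · exact .inl (le_csSup hbdd ⟨he, h0, hr'⟩)
    · exact .inr (csInf_le ⟨r, fun e he => he.2.le⟩ ⟨he, hr'⟩)
  · obtain ⟨e, he, hce⟩ := exists_lt_of_lt_csSup hne hc
    exact ⟨e, he.1, hce, le_csSup hbdd he⟩
  · obtain ⟨e, he, hed⟩ := exists_lt_of_csInf_lt habove hd
    exact ⟨e, he.1, csInf_le ⟨r, fun e he => he.2.le⟩ he, hed⟩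

end Components

section Backward

variable {E : Set ℝ}

lemma stronglyPorousWrt_of_eventually {τ : ℕ → ℝ} {A : ℕ → ℝ × ℝ}
    (hA : ∀ᶠ n in atTop, 0 < (A n).1 ∧ IsCompExt E (A n).1 (A n).2)
    (hlim : Tendsto (fun n => (A n).1) atTop (𝓝 0))
    (hratio : Tendsto (fun n => (A n).1 / (A n).2) atTop (𝓝 0))
    (hτ : SeqEquiv (fun n => (A n).1) τ) : StronglyPorousWrt E τ := by
  obtain ⟨N, hN⟩ := eventually_atTop.1 hA
  have hmax : Tendsto (fun n => max n N) atTop atTop :=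
    tendsto_atTop_mono (fun n => le_max_left n N) tendsto_id
  have hA' : ∀ n, 0 < (A (max n N)).1 ∧ IsCompExt E (A (max n N)).1 (A (max n N)).2 :=
    fun n => hN _ (le_max_right n N)
  refine ⟨fun n => A (max n N), ⟨fun n => (hA' n).1, fun n => (hA' n).2, hlim.comp hmax, ?_⟩, ?_⟩
  · exact (tendsto_sub_div_self_iff fun n => ((hA' n).1.trans (hA' n).2.2.1).ne').2
      (hratio.comp hmax)
  · obtain ⟨c₁, c₂, hc₁, hc₂, hev⟩ := hτ
    refine ⟨c₁, c₂, hc₁, hc₂, ?_⟩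
    filter_upwards [hev, eventually_ge_atTop N] with n hn hnN
    rwa [max_eq_left hnN]

lemma stronglyPorousWrt_of_gaps {τ r M : ℕ → ℝ} {C : ℝ} (hτE : ∀ n, τ n ∈ E)
    (hτpos : ∀ n, 0 < τ n) (hτ : Tendsto τ atTop (𝓝 0))
    (hrM : Tendsto (fun n => r n / M n) atTop (𝓝 0))
    (h : ∀ᶠ n in atTop, τ n ≤ r n ∧ r n ≤ C * τ n ∧ 0 < M n ∧ ∀ e ∈ E, r n < e → M n ≤ e) :
    StronglyPorousWrt E τ := by
  have hC : 0 < C := by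
    obtain ⟨n, h1, h2, -⟩ := h.exists
    nlinarith [hτpos n]
  have hCτ : Tendsto (fun n => C * τ n) atTop (𝓝 0) := by simpa using hτ.const_mul C
  set a := fun n => sSup (E ∩ Ioc 0 (r n))
  set b := fun n => sInf (E ∩ Ioi (r n))
  have key : ∀ᶠ n in atTop, τ n ≤ a n ∧ a n ≤ C * τ n ∧ a n / b n ≤ r n / M n ∧
      IsCompExt E (a n) (b n) := by
    filter_upwards [h, hCτ.eventually (gt_mem_nhds (hτpos 0)),
      hrM.eventually (gt_mem_nhds one_pos)] with n ⟨hτr, hrC, hM, hgap⟩ hr0 hrM1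
    have habove : (E ∩ Ioi (r n)).Nonempty := ⟨τ 0, hτE 0, by simp only [mem_Ioi]; linarith⟩
    have hMb : M n ≤ b n := le_csInf habove fun e he => hgap e he.1 he.2
    have hrM' : r n < M n := (div_lt_one hM).1 hrM1
    obtain ⟨hτa, har, hcomp⟩ := isCompExt_sSup_sInf (hτpos n) (hτE n) hτr habove (by linarith)
    exact ⟨hτa, har.trans hrC, div_le_div₀ (by linarith [hτpos n]) har hM hMb, hcomp⟩
  refine stronglyPorousWrt_of_eventually (A := fun n => (a n, b n))
    (key.mono fun n hn => ⟨(hτpos n).trans_le hn.1, hn.2.2.2⟩) ?_ ?_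
    ⟨C⁻¹, 1, inv_pos.2 hC, one_pos, key.mono fun n hn => ?_⟩
  · exact squeeze_zero' (key.mono fun n hn => (hτpos n).le.trans hn.1)
      (key.mono fun n hn => hn.2.1) hCτ
  · exact squeeze_zero' (key.mono fun n ⟨_, _, _, hcomp⟩ => div_nonneg hcomp.1
      (hcomp.1.trans hcomp.2.1.le)) (key.mono fun n hn => hn.2.2.1) hrM
  · exact ⟨(inv_mul_le_iff₀ hC).2 hn.2.1, by simpa using hn.1⟩

lemma inv_mul_le_of_cover {x : ℕ → ℝ} {q t : ℝ} (hx : Antitone x) (hq : 0 < q)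
    (hcov : ∀ e ∈ E, 0 < e → e < t → ∃ m, q⁻¹ * x m < e ∧ e < q * x m) {k : ℕ}
    (hkt : q⁻¹ * x (k - 1) ≤ t) {e : ℝ} (he : e ∈ E) (he0 : 0 < e) (hke : q * x k < e) :
    q⁻¹ * x (k - 1) ≤ e := by
  by_contra! hlt
  obtain ⟨m, hme, hem⟩ := hcov e he he0 (hlt.trans_le hkt)
  rcases le_or_gt k m with hkm | hmk
  · have := mul_le_mul_of_nonneg_left (hx hkm) hq.le
    linarith
  · have := mul_le_mul_of_nonneg_left (hx (show m ≤ k - 1 by omega)) (inv_pos.2 hq).le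
    linarith

lemma exists_window_index {x : ℕ → ℝ} {q t : ℝ} (hx : Antitone x) (hxpos : ∀ n, 0 < x n)
    (hq : 0 < q) (ht : 0 < t) (hcov : ∀ e ∈ E, 0 < e → e < t → ∃ m, q⁻¹ * x m < e ∧ e < q * x m)
    {τ : ℕ → ℝ} (hτE : ∀ n, τ n ∈ E) (hτpos : ∀ n, 0 < τ n) (hτ : Tendsto τ atTop (𝓝 0)) :
    ∃ κ : ℕ → ℕ, Tendsto κ atTop atTop ∧
      ∀ᶠ n in atTop, q⁻¹ * x (κ n) < τ n ∧ τ n < q * x (κ n) := by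
  have hwin : ∀ n, ∃ k, τ n < t → q⁻¹ * x k < τ n ∧ τ n < q * x k := fun n => by
    by_cases h : τ n < t
    · obtain ⟨k, hk⟩ := hcov (τ n) (hτE n) (hτpos n) h
      exact ⟨k, fun _ => hk⟩
    · exact ⟨0, fun h' => absurd h' h⟩
  choose κ hκ using hwin
  have hκτ : ∀ᶠ n in atTop, q⁻¹ * x (κ n) < τ n ∧ τ n < q * x (κ n) :=
    (hτ.eventually (gt_mem_nhds ht)).mono fun n hn => hκ n hn
  refine ⟨κ, hx.tendsto_atTop_of_tendsto_comp hxpos ?_, hκτ⟩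
  refine squeeze_zero' (.of_forall fun n => (hxpos _).le)
    (hκτ.mono fun n hn => ((inv_mul_lt_iff₀ hq).1 hn.1).le) ?_
  simpa using hτ.const_mul q

lemma HasLacunaryCover.csp (hE : E ⊆ Ici 0) (h : HasLacunaryCover E) : CSP E := by
  obtain ⟨q, hq, x, hx, hxpos, hxr, t, ht, hcov⟩ := h
  rintro τ ⟨-, hτ, hτE⟩
  have hq0 : 0 < q := by linarith
  have hτpos : ∀ n, 0 < τ n := fun n => (hE (hτE n).1).lt_of_ne' (hτE n).2
  have hcov' : ∀ e ∈ E, 0 < e → e < t → ∃ m, q⁻¹ * x m < e ∧ e < q * x m := fun e he he0 het =>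
    mem_iUnion.1 (hcov ⟨he, he0, het⟩).1
  obtain ⟨κ, hκ, hκτ⟩ := exists_window_index hx.antitone hxpos hq0 ht hcov'
    (fun n => (hτE n).1) hτpos hτ
  have hκ1 : Tendsto (fun n => κ n - 1) atTop atTop := (tendsto_sub_atTop_nat 1).comp hκ
  have hratio : Tendsto (fun n => q * q * (x (κ n) / x (κ n - 1))) atTop (𝓝 0) := by
    have hshift : Tendsto (fun n => x (κ n) / x (κ n - 1)) atTop (𝓝 0) := by
      refine (hxr.comp hκ1).congr' ?_
      filter_upwards [hκ.eventually_ge_atTop 1] with n hn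
      simp [Nat.sub_add_cancel hn]
    simpa using hshift.const_mul (q * q)
  have hx0 : Tendsto x atTop (𝓝 0) :=
    (summable_of_ratio_test_tendsto_lt_one zero_lt_one (.of_forall fun n => (hxpos n).ne')
      (by simpa [abs_of_pos, hxpos] using hxr)).tendsto_atTop_zero
  have hxκ1 : Tendsto (fun n => q⁻¹ * x (κ n - 1)) atTop (𝓝 0) := by
    simpa using (hx0.comp hκ1).const_mul q⁻¹
  refine stronglyPorousWrt_of_gaps (r := fun n => q * x (κ n)) (M := fun n => q⁻¹ * x (κ n - 1))
    (C := q * q) (fun n => (hτE n).1) hτpos hτ (hratio.congr fun n => ?_) ?_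
  · have := hxpos (κ n - 1)
    field_simp
  · filter_upwards [hκτ, hxκ1.eventually (gt_mem_nhds ht)] with n ⟨hlo, hhi⟩ hxt
    have hlo' : x (κ n) < q * τ n := (inv_mul_lt_iff₀ hq0).1 hlo
    refine ⟨hhi.le, by nlinarith, by have := hxpos (κ n - 1); positivity, fun e he hlt => ?_⟩
    exact inv_mul_le_of_cover hx.antitone hq0 hcov' hxt.le he
      ((mul_pos hq0 (hxpos _)).trans hlt) hlt

end Backward

section Forward

variable {E : Set ℝ}

lemma AccZero.exists_mem_near_sSup (acc : AccZero E) {v : ℝ} (hv : 0 < v) :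
    ∃ w ∈ E, 0 < w ∧ 2 * w < v ∧ ∀ e ∈ E, 0 < e → 2 * e < v → e < 2 * w := by
  obtain ⟨e₀, he₀, he₀0, he₀v⟩ := acc (v / 2) (half_pos hv)
  have hne : (E ∩ Ioo 0 (v / 2)).Nonempty := ⟨e₀, he₀, he₀0, he₀v⟩
  have hbdd : BddAbove (E ∩ Ioo 0 (v / 2)) := ⟨v / 2, fun e he => he.2.2.le⟩
  have hs : 0 < sSup (E ∩ Ioo 0 (v / 2)) := he₀0.trans_le (le_csSup hbdd ⟨he₀, he₀0, he₀v⟩)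
  obtain ⟨w, ⟨hwE, hw0, hwv⟩, hsw⟩ := exists_lt_of_lt_csSup hne (half_lt_self hs)
  refine ⟨w, hwE, hw0, by linarith, fun e he he0 hev => ?_⟩
  have := le_csSup hbdd ⟨he, he0, show e < v / 2 by linarith⟩
  linarith

lemma AccZero.exists_greedy_seq (acc : AccZero E) :
    ∃ y : ℕ → ℝ, (∀ n, y n ∈ E) ∧ (∀ n, 0 < y n) ∧ StrictAnti y ∧ Tendsto y atTop (𝓝 0) ∧
      ∀ n, ∀ e ∈ E, 0 < e → 2 * e < y n → e < 2 * y (n + 1) := by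
  choose F hFE hFpos hF2 hFnext using fun v : Ioi (0 : ℝ) => acc.exists_mem_near_sSup v.2
  obtain ⟨y₀, hy₀E, hy₀, -⟩ := acc 1 one_pos
  let G : Ioi (0 : ℝ) → Ioi (0 : ℝ) := fun v => ⟨F v, hFpos v⟩
  set y : ℕ → ℝ := fun n => (G^[n] ⟨y₀, hy₀⟩ : ℝ)
  have hsucc : ∀ n, y (n + 1) = F (G^[n] ⟨y₀, hy₀⟩) := fun n => by
    simp only [y, Function.iterate_succ_apply']; rfl
  have hpos : ∀ n, 0 < y n := fun n => (G^[n] ⟨y₀, hy₀⟩).2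
  have hhalf : ∀ n, 2 * y (n + 1) < y n := fun n => by rw [hsucc]; exact hF2 _
  have hanti : StrictAnti y :=
    strictAnti_nat_of_succ_lt fun n => by linarith [hhalf n, hpos (n + 1)]
  refine ⟨y, fun n => ?_, hpos, hanti, ?_, fun n => by rw [hsucc]; exact hFnext _⟩
  · cases n with
    | zero => exact hy₀E
    | succ n => rw [hsucc]; exact hFE _
  · refine (summable_of_ratio_norm_eventually_le (r := 1 / 2) (by norm_num)
      (.of_forall fun n => ?_)).tendsto_atTop_zero
    rw [Real.norm_of_nonneg (hpos _).le, Real.norm_of_nonneg (hpos _).le]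
    linarith [hhalf n]

lemma exists_index_within_factor_two {y : ℕ → ℝ} (hy : StrictAnti y) (hlim : Tendsto y atTop (𝓝 0))
    (hnext : ∀ n, ∀ e ∈ E, 0 < e → 2 * e < y n → e < 2 * y (n + 1)) (N : ℕ) {e : ℝ}
    (he : e ∈ E) (he0 : 0 < e) (heN : e < y N) : ∃ n ≥ N, y n ≤ 2 * e ∧ e < 2 * y n := by
  classical
  have hex : ∃ m, y m ≤ e := (hlim.eventually (eventually_le_nhds he0)).exists
  set m := Nat.find hex
  have hNm : N < m :=
    lt_of_not_ge fun h => (hy.antitone h).not_gt (heN.trans_le' (Nat.find_spec hex))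
  have hm1 : e < y (m - 1) := lt_of_not_ge (Nat.find_min hex (by omega))
  have hm : y (m - 1 + 1) ≤ e := by rw [Nat.sub_add_cancel (by omega)]; exact Nat.find_spec hex
  rcases le_or_gt (y (m - 1)) (2 * e) with h | h
  · exact ⟨m - 1, by omega, h, by linarith⟩
  · exact ⟨m - 1 + 1, by omega, by linarith, hnext _ e he he0 h⟩

lemma CSP.exists_gaps (hcsp : CSP E) {y : ℕ → ℝ} (hy : memE0d E y) :
    ∃ (α β : ℕ → ℝ) (C : ℝ), (∀ᶠ k in atTop, y k ≤ α k ∧ α k ≤ C * y k) ∧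
      (∀ k j, y j ≤ α k ∨ β k ≤ y j) ∧ (∀ k, 0 < β k) ∧
      Tendsto (fun k => α k / β k) atTop (𝓝 0) := by
  obtain ⟨A, hA, c₁, c₂, hc₁, hc₂, hev⟩ := hcsp y hy
  have hgap : ∀ k j, y j ≤ (A k).1 ∨ (A k).2 ≤ y j := fun k j =>
    (hA.2.1 k).le_or_le (hy.2.2 j).1
  refine ⟨fun k => (A k).1, fun k => (A k).2, c₁⁻¹, ?_, hgap, hA.snd_pos, hA.tendsto_fst_div_snd⟩
  filter_upwards [hev, hA.tendsto_fst_div_snd.eventually (gt_mem_nhds (inv_pos.2 hc₂))]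
    with k ⟨hc₁k, hc₂k⟩ hk
  have hab : c₂ * (A k).1 < (A k).2 := (lt_inv_mul_iff₀ hc₂).1 ((div_lt_iff₀ (hA.snd_pos k)).1 hk)
  exact ⟨(hgap k k).resolve_right fun h => by linarith, (le_inv_mul_iff₀ hc₁).2 hc₁k⟩

lemma le_of_small_steps_of_gap {y : ℕ → ℝ} {a b C : ℝ} (hgap : ∀ j, y j ≤ a ∨ b ≤ y j)
    (hC : 0 ≤ C) (hab : C * a < b) {j k : ℕ} (hjk : j ≤ k) (hk : y k ≤ a)
    (hsteps : ∀ m, j ≤ m → m < k → y m ≤ C * y (m + 1)) : y j ≤ a := by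
  induction hjk using Nat.decreasingInduction with
  | self => exact hk
  | of_succ m hmk ih =>
    have h1 := ih fun i hi hik => hsteps i (by omega) hik
    have h2 := hsteps m le_rfl hmk
    exact (hgap m).resolve_right fun h => by nlinarith

lemma infinite_setOf_big_steps {y : ℕ → ℝ} {C : ℝ} (hpos : ∀ n, 0 < y n)
    (hlim : Tendsto y atTop (𝓝 0)) {N₀ : ℕ}
    (htrap : ∀ j k, N₀ ≤ k → j ≤ k → (∀ m, j ≤ m → m < k → y m ≤ C * y (m + 1)) →
      y j ≤ C * y k) :
    (Set.ofPred fun m => N₀ ≤ m ∧ C * y (m + 1) < y m).Infinite := by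
  refine infinite_of_forall_exists_gt fun a => ?_
  by_contra! h
  have hCy : Tendsto (fun k => C * y k) atTop (𝓝 0) := by simpa using hlim.const_mul C
  obtain ⟨k, hjk, hk⟩ := ((eventually_ge_atTop (max a N₀ + 1)).and
    (hCy.eventually (gt_mem_nhds (hpos (max a N₀ + 1))))).exists
  have := htrap _ k (by omega) hjk fun m hjm _ =>
    not_lt.1 fun hm => by have := h m ⟨by omega, hm⟩; omega
  linarith

lemma exists_lacunary_of_gaps {y α β : ℕ → ℝ} {C : ℝ} (hy : StrictAnti y)
    (hpos : ∀ n, 0 < y n) (hlim : Tendsto y atTop (𝓝 0))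
    (hα : ∀ᶠ k in atTop, y k ≤ α k ∧ α k ≤ C * y k) (hgap : ∀ k j, y j ≤ α k ∨ β k ≤ y j)
    (hβ : ∀ k, 0 < β k) (hαβ : Tendsto (fun k => α k / β k) atTop (𝓝 0)) :
    ∃ x : ℕ → ℝ, StrictAnti x ∧ (∀ i, 0 < x i) ∧
      Tendsto (fun i => x (i + 1) / x i) atTop (𝓝 0) ∧
      ∃ N, ∀ k ≥ N, ∃ i, x i ≤ C * y k ∧ y k ≤ x i := by
  have hC : 0 < C := by
    obtain ⟨k, h1, h2⟩ := hα.exists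
    nlinarith [hpos k]
  obtain ⟨N₀, hN₀⟩ := eventually_atTop.1 (hα.and (hαβ.eventually (gt_mem_nhds (inv_pos.2 hC))))
  have htrap : ∀ j k, N₀ ≤ k → j ≤ k → (∀ m, j ≤ m → m < k → y m ≤ C * y (m + 1)) →
      y j ≤ C * y k := by
    intro j k hk hjk hsteps
    obtain ⟨⟨hyα, hαC⟩, hαβk⟩ := hN₀ k hk
    have hab : C * α k < β k := (lt_inv_mul_iff₀ hC).1 ((div_lt_iff₀ (hβ k)).1 hαβk)
    exact (le_of_small_steps_of_gap (hgap k) hC.le hab hjk hyα hsteps).trans hαC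
  let p : ℕ → Prop := fun m => N₀ ≤ m ∧ C * y (m + 1) < y m
  have hp : (Set.ofPred p).Infinite := infinite_setOf_big_steps hpos hlim htrap
  set g := Nat.nth p
  have hg : StrictMono g := Nat.nth_strictMono hp
  have hgp : ∀ i, p (g i) := Nat.nth_mem_of_infinite hp
  have hjump : ∀ i, y (g i + 1) / y (g i) ≤ α (g i + 1) / β (g i + 1) := by
    intro i
    obtain ⟨hN, hbig⟩ := hgp i
    obtain ⟨⟨hyα, hαC⟩, -⟩ := hN₀ (g i + 1) (by omega)
    have hβy : β (g i + 1) ≤ y (g i) := (hgap _ _).resolve_left fun h => by linarith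
    exact div_le_div₀ ((hpos _).le.trans hyα) hyα (hβ _) hβy
  refine ⟨fun i => y (g i + 1), fun i j hij => hy (by have := hg hij; omega), fun i => hpos _, ?_,
    g 0 + 1, fun k hk => ?_⟩
  · have hsucc : Tendsto (fun i => g (i + 1) + 1) atTop atTop :=
      (tendsto_add_atTop_nat 1).comp (hg.tendsto_atTop.comp (tendsto_add_atTop_nat 1))
    refine squeeze_zero (fun i => (div_pos (hpos _) (hpos _)).le) (fun i => ?_) (hαβ.comp hsucc)
    have hle : y (g (i + 1)) ≤ y (g i + 1) := hy.antitone (hg (Nat.lt_succ_self i))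
    exact (div_le_div_of_nonneg_left (hpos _).le (hpos _) hle).trans (hjump (i + 1))
  · obtain ⟨i, hik, hki⟩ : ∃ i, g i ≤ k - 1 ∧ k - 1 < g (i + 1) :=
      Nat.exists_nth_le_lt_nth_succ hp (show g 0 ≤ k - 1 by omega)
    refine ⟨i, htrap _ k ((hgp i).1.trans (by omega)) (by omega) fun m hm hmk => ?_,
      hy.antitone (by omega)⟩
    refine not_lt.1 fun hbig => ?_
    have : m ≤ g i :=
      Nat.le_nth_of_lt_nth_succ (show m < g (i + 1) by omega) ⟨(hgp i).1.trans (by omega), hbig⟩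
    omega

lemma hasLacunaryCover_of_not_accZero (h : ¬ AccZero E) : HasLacunaryCover E := by
  obtain ⟨ε, hε, hfar⟩ : ∃ ε > 0, ∀ e ∈ E, 0 < e → ε ≤ e := by
    simpa only [AccZero, not_forall, not_exists, not_and, not_lt, exists_prop] using h
  refine ⟨2, one_lt_two, fun n => Real.exp (-(n : ℝ) ^ 2), fun m n hmn => ?_,
    fun n => Real.exp_pos _, ?_, ε, hε,
    fun e ⟨he, he0, heε⟩ => absurd (hfar e he he0) (not_le.2 heε)⟩
  · have : (m : ℝ) < n := by exact_mod_cast hmn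
    exact Real.exp_lt_exp.2 (by nlinarith [m.cast_nonneg (α := ℝ)])
  · have h2n : Tendsto (fun n : ℕ => 2 * (n : ℝ) + 1) atTop atTop :=
      tendsto_atTop_add_const_right _ _
        (tendsto_natCast_atTop_atTop.const_mul_atTop two_pos)
    refine (Real.tendsto_exp_neg_atTop_nhds_zero.comp h2n).congr fun n => ?_
    simp only [Function.comp, ← Real.exp_sub]
    push_cast
    ring_nf

lemma CSP.hasLacunaryCover (hcsp : CSP E) (acc : AccZero E) : HasLacunaryCover E := by
  obtain ⟨y, hyE, hpos, hy, hlim, hnext⟩ := acc.exists_greedy_seq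
  obtain ⟨α, β, C, hα, hgap, hβ, hαβ⟩ := hcsp.exists_gaps
    ⟨.of_forall fun n => (hy (Nat.lt_succ_self n)).le, hlim, fun n => ⟨hyE n, (hpos n).ne'⟩⟩
  obtain ⟨x, hx, hxpos, hxr, N, hcov⟩ := exists_lacunary_of_gaps hy hpos hlim hα hgap hβ hαβ
  have hC : 1 ≤ C := by
    obtain ⟨i, h1, h2⟩ := hcov N le_rfl
    nlinarith [hpos N]
  refine ⟨3 * C, by linarith, x, hx, hxpos, hxr, y N, hpos N,
    fun e ⟨he, he0, heN⟩ => ⟨?_, he0, heN⟩⟩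
  obtain ⟨n, hn, hyn, hen⟩ := exists_index_within_factor_two hy hlim hnext N he he0 heN
  obtain ⟨i, hxi, hyi⟩ := hcov n hn
  have hlow : (3 * C)⁻¹ * x i < e := (inv_mul_lt_iff₀ (by positivity)).2 (by nlinarith)
  have hhigh : e < 3 * C * x i := by nlinarith [hxpos i]
  exact mem_iUnion.2 ⟨i, hlow, hhigh⟩

end Forward

theorem stmt17 (E : Set ℝ) (hE : E ⊆ Set.Ici 0) :
    CSP E ↔ ∃ q : ℝ, 1 < q ∧ ∃ x : ℕ → ℝ, StrictAnti x ∧ (∀ n, 0 < x n) ∧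
      Filter.Tendsto (fun n => x (n + 1) / x n) Filter.atTop (nhds 0) ∧
      ∃ t : ℝ, 0 < t ∧
        E ∩ Set.Ioo 0 t ⊆ (⋃ n : ℕ, Set.Ioo (q⁻¹ * x n) (q * x n)) ∩ Set.Ioo 0 t := by
  refine ⟨fun hcsp => ?_, HasLacunaryCover.csp hE⟩
  by_cases acc : AccZero E
  · exact hcsp.hasLacunaryCover acc
  · exact hasLacunaryCover_of_not_accZero acc
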